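/- For a group G, the intersection of the kernels of all group homomorphisms G → U(1) contains the commutator subgroup of G; if G is free, this intersection equals the commutator subgroup. -/

import Mathlib

open Real

lemma exp_one_zpow (n : ℤ) : Circle.exp 1 ^ n = Circle.exp (n : ℝ) := by
  have h := map_zsmul Circle.expHom n (1 : ℝ)
  have h2 : Circle.expHom ((n : ℝ)) = n • Circle.expHom 1 := by
    rw [← h]; norm_num
  have : Additive.ofMul (Circle.exp (n : ℝ)) = Additive.ofMul (Circle.exp 1 ^ n) := by
    simpa using (h2 : Additive.ofMul (Circle.exp (n : ℝ)) = n • Additive.ofMul (Circle.exp 1))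
  exact (Additive.ofMul.injective this).symm

lemma exp_one_zpow_eq_one {n : ℤ} (h : Circle.exp 1 ^ n = 1) : n = 0 := by
  rw [exp_one_zpow] at h
  obtain ⟨m, hm⟩ := Circle.exp_eq_one.mp h
  by_contra hn
  have hm0 : m ≠ 0 := by rintro rfl; simp at hm; exact_mod_cast hn (by exact_mod_cast hm)
  have : Irrational π := irrational_pi
  have hπ : (π : ℝ) = n / (2 * m) := by
    field_simp at hm ⊢
    linarith [hm]
  rw [hπ] at this
  exact this ⟨(n : ℚ) / (2 * m), by push_cast; ring⟩

/-- For any group `G`, the intersection of the kernels of all homomorphisms `G → U(1)`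
contains the commutator subgroup; if `G` is free, this intersection equals the
commutator subgroup. -/
theorem stmt3 :
    (∀ (G : Type) [Group G], commutator G ≤ ⨅ φ : G →* Circle, φ.ker) ∧
    (∀ (β : Type),
        (⨅ φ : FreeGroup β →* Circle, φ.ker) = commutator (FreeGroup β)) := by
  have part1 : ∀ (G : Type) [Group G], commutator G ≤ ⨅ φ : G →* Circle, φ.ker := by
    intro G _
    exact le_iInf fun φ => Abelianization.commutator_subset_ker φ
  refine ⟨part1, fun β => le_antisymm ?_ (part1 _)⟩
  intro x hx
  by_contra h
  have h1 : Abelianization.of x ≠ 1 := fun he => h ((QuotientGroup.eq_one_iff x).mp he)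
  -- move to the free abelian group / finsupp picture
  set a : FreeAbelianGroup β := Additive.ofMul (Abelianization.of x) with ha
  have ha0 : a ≠ 0 := by
    intro hz
    apply h1
    exact Additive.ofMul.injective hz
  have : FreeAbelianGroup.equivFinsupp β a ≠ 0 := by
    intro hz; exact ha0 ((FreeAbelianGroup.equivFinsupp β).injective (by simpa using hz))
  obtain ⟨b, hb⟩ : ∃ b, FreeAbelianGroup.equivFinsupp β a b ≠ 0 := by
    by_contra hco
    push_neg at hco
    exact this (Finsupp.ext fun b => hco b)
  -- build the homomorphism to the circle
  set g : FreeAbelianGroup β →+ ℤ :=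
    (Finsupp.applyAddHom b).comp (FreeAbelianGroup.equivFinsupp β).toAddMonoidHom with hg
  set ψ : Abelianization (FreeGroup β) →* Multiplicative ℤ :=
    AddMonoidHom.toMultiplicativeRight g with hψ
  set φ : FreeGroup β →* Circle :=
    (zpowersHom Circle (Circle.exp 1)).comp (ψ.comp Abelianization.of) with hφ
  have hker : φ x = 1 := by
    have := (Subgroup.mem_iInf.mp hx) φ
    exact this
  have hval : φ x = Circle.exp 1 ^ (FreeAbelianGroup.equivFinsupp β a b) := by
    rfl
  rw [hval] at hker
  exact hb (exp_one_zpow_eq_one hker)
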